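/- Let ω ∈ {0,1,2}^ℕ be such that σω is a constant sequence but ω is not constant (i.e., ω_i = ω_2 for all i ≥ 2 and ω_1 ≠ ω_2). Then for every n ≥ 4 the finite group G_ω/St_{G_ω}(n) admits an unmixed ramification structure of size (4,4). -/

import Mathlib

namespace Grig

/-- Sequences ω ∈ {0,1,2}^ℕ (0-indexed: `ω n` is the paper's ω_{n+1}). -/
abbrev Seq := ℕ → Fin 3

/-- The shifted sequence σω. -/
def shift (ω : Seq) : Seq := fun n => ω (n + 1)

/-- The n-fold shifted sequence σⁿω. -/
def shiftn (n : ℕ) (ω : Seq) : Seq := fun m => ω (m + n)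

/-- The rooted automorphism `a`, as a map on words over {0,1} (encoded as `List Bool`). -/
def aMap : List Bool → List Bool
  | [] => []
  | x :: w => (!x) :: w

lemma aMap_invol : ∀ w, aMap (aMap w) = w := by
  intro w; cases w <;> simp [aMap]

/-- The rooted automorphism `a`. -/
def aPerm : Equiv.Perm (List Bool) := ⟨aMap, aMap, aMap_invol, aMap_invol⟩

/-- The directed automorphism with "trivial tag" `k` of the Grigorchuk group `G_ω`:
`k = 2` gives `b_ω`, `k = 1` gives `c_ω`, `k = 0` gives `d_ω`.  Its section at the
vertex 1 is the corresponding automorphism for σω, and its section at the vertex 0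
is `a` if ω₁ ≠ k and trivial if ω₁ = k. -/
def genMap (k : Fin 3) : Seq → List Bool → List Bool
  | _, [] => []
  | ω, false :: w => false :: (if ω 0 = k then w else aMap w)
  | ω, true :: w => true :: genMap k (shift ω) w

lemma genMap_invol (k : Fin 3) : ∀ (w : List Bool) (ω : Seq), genMap k ω (genMap k ω w) = w := by
  intro w
  induction w with
  | nil => intro ω; rfl
  | cons x w ih =>
      intro ω
      cases x with
      | false => by_cases h : ω 0 = k <;> simp [genMap, h, aMap_invol]
      | true => simp [genMap, ih]

def genPerm (k : Fin 3) (ω : Seq) : Equiv.Perm (List Bool) :=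
  ⟨genMap k ω, genMap k ω, fun w => genMap_invol k w ω, fun w => genMap_invol k w ω⟩

/-- The generator `b_ω`. -/
def b (ω : Seq) : Equiv.Perm (List Bool) := genPerm 2 ω
/-- The generator `c_ω`. -/
def c (ω : Seq) : Equiv.Perm (List Bool) := genPerm 1 ω
/-- The generator `d_ω`. -/
def d (ω : Seq) : Equiv.Perm (List Bool) := genPerm 0 ω

/-- The Grigorchuk group `G_ω = ⟨a, b_ω, c_ω, d_ω⟩`, as a subgroup of the group of
permutations of the vertices of the binary rooted tree.  (Every generator preserves
word length and prefixes, so `G_ω` consists of automorphisms of the tree.) -/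
def G (ω : Seq) : Subgroup (Equiv.Perm (List Bool)) :=
  Subgroup.closure {aPerm, b ω, c ω, d ω}

lemma aPerm_mem (ω : Seq) : aPerm ∈ G ω := Subgroup.subset_closure (by simp)
lemma b_mem (ω : Seq) : b ω ∈ G ω := Subgroup.subset_closure (by simp)
lemma c_mem (ω : Seq) : c ω ∈ G ω := Subgroup.subset_closure (by simp)
lemma d_mem (ω : Seq) : d ω ∈ G ω := Subgroup.subset_closure (by simp)

/-- `a` as an element of `G_ω`. -/
def aSub (ω : Seq) : ↥(G ω) := ⟨aPerm, aPerm_mem ω⟩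
/-- `b_ω` as an element of `G_ω`. -/
def bSub (ω : Seq) : ↥(G ω) := ⟨b ω, b_mem ω⟩
/-- `c_ω` as an element of `G_ω`. -/
def cSub (ω : Seq) : ↥(G ω) := ⟨c ω, c_mem ω⟩
/-- `d_ω` as an element of `G_ω`. -/
def dSub (ω : Seq) : ↥(G ω) := ⟨d ω, d_mem ω⟩

/-- The subgroup of permutations of the tree fixing every vertex of level `n`. -/
def levelStab (n : ℕ) : Subgroup (Equiv.Perm (List Bool)) where
  carrier := {f | ∀ w : List Bool, w.length = n → f w = w}
  one_mem' := by intro w _; rfl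
  mul_mem' := by
    intro f g hf hg w hw
    rw [Equiv.Perm.mul_apply, hg w hw, hf w hw]
  inv_mem' := by
    intro f hf w hw
    calc f⁻¹ w = f⁻¹ (f w) := by rw [hf w hw]
    _ = w := f.symm_apply_apply w

/-- The `n`-th level stabiliser `St_{G_ω}(n)` (as a subgroup of the ambient
permutation group). -/
def St (ω : Seq) (n : ℕ) : Subgroup (Equiv.Perm (List Bool)) := G ω ⊓ levelStab n

/-- The `n`-th level stabiliser `St_{G_ω}(n)` seen as a subgroup of `G_ω`. -/
def stab (ω : Seq) (n : ℕ) : Subgroup ↥(G ω) := (levelStab n).subgroupOf (G ω)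

lemma aMap_length (w : List Bool) : (aMap w).length = w.length := by
  cases w <;> simp [aMap]

lemma genMap_length (k : Fin 3) :
    ∀ (w : List Bool) (ω : Seq), (genMap k ω w).length = w.length := by
  intro w
  induction w with
  | nil => intro ω; rfl
  | cons x w ih =>
      intro ω
      cases x with
      | false => by_cases h : ω 0 = k <;> simp [genMap, h, aMap_length]
      | true => simp [genMap, ih]

/-- The subgroup of length-preserving permutations of the set of words. -/
def lenPres : Subgroup (Equiv.Perm (List Bool)) where
  carrier := {f | ∀ w : List Bool, (f w).length = w.length}
  one_mem' := by intro w; rfl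
  mul_mem' := by
    intro f g hf hg w
    rw [Equiv.Perm.mul_apply, hf, hg]
  inv_mem' := by
    intro f hf w
    conv_rhs => rw [← (show f (f⁻¹ w) = w from f.apply_symm_apply w)]
    rw [hf]

lemma G_le_lenPres (ω : Seq) : G ω ≤ lenPres := by
  rw [G]
  refine (Subgroup.closure_le _).2 ?_
  intro x hx
  simp only [Set.mem_insert_iff, Set.mem_singleton_iff] at hx
  rcases hx with rfl | rfl | rfl | rfl
  · exact fun w => aMap_length w
  · exact fun w => genMap_length 2 w ω
  · exact fun w => genMap_length 1 w ω
  · exact fun w => genMap_length 0 w ω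

instance stab_normal (ω : Seq) (n : ℕ) : (stab ω n).Normal := by
  constructor
  intro h hh g
  simp only [stab, Subgroup.mem_subgroupOf] at hh ⊢
  intro w hw
  have hginv : ((g : Equiv.Perm (List Bool))⁻¹ w).length = n := by
    rw [G_le_lenPres ω ((G ω).inv_mem g.2) w, hw]
  have : ((h : Equiv.Perm (List Bool))) ((g : Equiv.Perm (List Bool))⁻¹ w)
      = (g : Equiv.Perm (List Bool))⁻¹ w := hh _ hginv
  simp only [Subgroup.coe_mul, InvMemClass.coe_inv, Equiv.Perm.mul_apply]
  rw [this]; exact Equiv.apply_symm_apply _ w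

/-- A (spherical) system of generators of a group. -/
def SphericalSystem {Q : Type*} [Group Q] {r : ℕ} (T : Fin r → Q) : Prop :=
  3 ≤ r ∧ (∀ i, T i ≠ 1) ∧ Subgroup.closure (Set.range T) = ⊤ ∧ (List.ofFn T).prod = 1

/-- The set Σ(T): the union of all conjugates of the cyclic subgroups generated by
the entries of `T`. -/
def SigmaSet {Q : Type*} [Group Q] {r : ℕ} (T : Fin r → Q) : Set Q :=
  ⋃ (g : Q) (i : Fin r), (fun x => g⁻¹ * x * g) '' (Subgroup.zpowers (T i) : Set Q)

/-- An (unmixed) ramification structure of size `(r₁, r₂)` for a group `Q`. -/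
def HasRamificationStructure (Q : Type*) [Group Q] (r₁ r₂ : ℕ) : Prop :=
  ∃ (T₁ : Fin r₁ → Q) (T₂ : Fin r₂ → Q),
    SphericalSystem T₁ ∧ SphericalSystem T₂ ∧ SigmaSet T₁ ∩ SigmaSet T₂ = {1}

/-- `i_k(ω) = min {n ≥ 1 : ω_n = k}` (meaningful when some entry of ω equals `k`;
with our 0-indexing this is `sInf {n | ω n = k} + 1`). -/
noncomputable def ikFin (k : Fin 3) (ω : Seq) : ℕ := sInf {n | ω n = k} + 1

/-- `m(ω) = max {n ≥ 1 : ω_1 = ⋯ = ω_n}` for a non-constant sequence ω;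
with our 0-indexing this is the least index where ω differs from ω 0. -/
noncomputable def mval (ω : Seq) : ℕ := sInf {n | ω n ≠ ω 0}


/-- The normal closure of the element `x` relative to the subgroup `H`:
the subgroup generated by all `H`-conjugates of `x`. -/
def nclIn (H : Subgroup (Equiv.Perm (List Bool))) (x : Equiv.Perm (List Bool)) :
    Subgroup (Equiv.Perm (List Bool)) :=
  Subgroup.closure {y | ∃ g ∈ H, y = g * x * g⁻¹}

/-- The `d`-generator of `G_ω`: `d_ω` if ω₁ = 0, `c_ω` if ω₁ = 1 and `b_ω` if ω₁ = 2;
with our encoding this is simply `genPerm (ω 0) ω`. -/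
def dGenPerm (ω : Seq) : Equiv.Perm (List Bool) := genPerm (ω 0) ω

/-- The subgroup of permutations fixing every word that does not have `u` as a prefix. -/
def awayStab (u : List Bool) : Subgroup (Equiv.Perm (List Bool)) where
  carrier := {f | ∀ w : List Bool, ¬ u <+: w → f w = w}
  one_mem' := by intro w _; rfl
  mul_mem' := by
    intro f g hf hg w hw
    rw [Equiv.Perm.mul_apply, hg w hw, hf w hw]
  inv_mem' := by
    intro f hf w hw
    calc f⁻¹ w = f⁻¹ (f w) := by rw [hf w hw]
    _ = w := f.symm_apply_apply w

/-- The rigid vertex stabiliser `Rist_{G_ω}(u)`. -/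
def Rist (ω : Seq) (u : List Bool) : Subgroup (Equiv.Perm (List Bool)) :=
  G ω ⊓ awayStab u

/-- The section map φ_u : for an automorphism `f` fixing the vertex `u`, the value
`sectionFun u f` is the section of `f` at `u` (as a map on words). -/
def sectionFun (u : List Bool) (f : Equiv.Perm (List Bool)) : List Bool → List Bool :=
  fun v => (f (u ++ v)).drop u.length

/-- The `d`-generator `x_ω` of `G_ω`, as an element of `G_ω`. -/
def xGen (ω : Seq) : ↥(G ω) :=
  if ω 0 = 0 then ⟨d ω, Subgroup.subset_closure (by simp)⟩
  else if ω 0 = 1 then ⟨c ω, Subgroup.subset_closure (by simp)⟩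
  else ⟨b ω, Subgroup.subset_closure (by simp)⟩

/-- The `c`-generator `y_ω` of `G_ω` (determined by ω_{m(ω)+1}), as an element of `G_ω`. -/
noncomputable def yGen (ω : Seq) : ↥(G ω) :=
  if ω (mval ω) = 0 then ⟨d ω, Subgroup.subset_closure (by simp)⟩
  else if ω (mval ω) = 1 then ⟨c ω, Subgroup.subset_closure (by simp)⟩
  else ⟨b ω, Subgroup.subset_closure (by simp)⟩

open scoped Classical in
/-- The bound `M` of the main theorem. -/
noncomputable def Mval (ω : Seq) : ℕ :=
  if ∀ k : Fin 3, ∃ n, shift ω n = k then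
    (Finset.univ.sup fun k : Fin 3 => ikFin k (shift ω)) + 4
  else if ∀ n, shift ω n = shift ω 0 then 4
  else ((Finset.univ.filter fun k : Fin 3 => ∃ n, shift ω n = k).sup
          fun k => ikFin k (shift ω)) + 4


end Grig

namespace Grig

/-! ### The automorphism `B` and pair permutations -/

def bMapF : List Bool → List Bool
  | [] => []
  | false :: w => false :: aMap w
  | true :: w => true :: bMapF w

lemma bMapF_invol : ∀ w, bMapF (bMapF w) = w := by
  intro w
  induction w with
  | nil => rfl
  | cons x w ih =>
      cases x with
      | false => simp [bMapF, aMap_invol]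
      | true => simp [bMapF, ih]

def Bp : Equiv.Perm (List Bool) := ⟨bMapF, bMapF, bMapF_invol, bMapF_invol⟩

def pairMap (f g : List Bool → List Bool) : List Bool → List Bool
  | [] => []
  | false :: w => false :: f w
  | true :: w => true :: g w

lemma pairMap_comp (f g f' g' : List Bool → List Bool) (w : List Bool) :
    pairMap f g (pairMap f' g' w) = pairMap (f ∘ f') (g ∘ g') w := by
  cases w with
  | nil => rfl
  | cons x w => cases x <;> rfl

def pairPerm (u v : Equiv.Perm (List Bool)) : Equiv.Perm (List Bool) where
  toFun := pairMap u v
  invFun := pairMap u.symm v.symm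
  left_inv := by
    intro w
    rw [pairMap_comp]
    cases w with
    | nil => rfl
    | cons x w => cases x <;> simp [pairMap]
  right_inv := by
    intro w
    rw [pairMap_comp]
    cases w with
    | nil => rfl
    | cons x w => cases x <;> simp [pairMap]

@[simp] lemma pairPerm_nil (u v : Equiv.Perm (List Bool)) : pairPerm u v [] = [] := rfl
@[simp] lemma pairPerm_false (u v : Equiv.Perm (List Bool)) (w : List Bool) :
    pairPerm u v (false :: w) = false :: u w := rfl
@[simp] lemma pairPerm_true (u v : Equiv.Perm (List Bool)) (w : List Bool) :
    pairPerm u v (true :: w) = true :: v w := rfl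
@[simp] lemma aPerm_nil : aPerm [] = [] := rfl
@[simp] lemma aPerm_cons (x : Bool) (w : List Bool) : aPerm (x :: w) = (!x) :: w := rfl
@[simp] lemma Bp_nil : Bp [] = [] := rfl
@[simp] lemma Bp_false (w : List Bool) : Bp (false :: w) = false :: aMap w := rfl
@[simp] lemma Bp_true (w : List Bool) : Bp (true :: w) = true :: Bp w := rfl

lemma pairPerm_mul (u v u' v' : Equiv.Perm (List Bool)) :
    pairPerm u v * pairPerm u' v' = pairPerm (u * u') (v * v') := by
  apply Equiv.ext; intro w
  cases w with
  | nil => rfl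
  | cons x w => cases x <;> rfl

@[simp] lemma pairPerm_one : pairPerm 1 1 = 1 := by
  apply Equiv.ext; intro w
  cases w with
  | nil => rfl
  | cons x w => cases x <;> rfl

lemma aPerm_mul_pairPerm (u v : Equiv.Perm (List Bool)) :
    aPerm * pairPerm u v = pairPerm v u * aPerm := by
  apply Equiv.ext; intro w
  cases w with
  | nil => rfl
  | cons x w => cases x <;> rfl

@[simp] lemma aPerm_sq : aPerm * aPerm = 1 :=
  Equiv.ext fun w => aMap_invol w

@[simp] lemma Bp_sq : Bp * Bp = 1 :=
  Equiv.ext fun w => bMapF_invol w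

@[simp] lemma aPerm_sq' (x : Equiv.Perm (List Bool)) : aPerm * (aPerm * x) = x := by
  rw [← mul_assoc, aPerm_sq, one_mul]

@[simp] lemma Bp_sq' (x : Equiv.Perm (List Bool)) : Bp * (Bp * x) = x := by
  rw [← mul_assoc, Bp_sq, one_mul]

@[simp] lemma pairPerm_mul' (u v u' v' : Equiv.Perm (List Bool)) (x : Equiv.Perm (List Bool)) :
    pairPerm u v * (pairPerm u' v' * x) = pairPerm (u * u') (v * v') * x := by
  rw [← mul_assoc, pairPerm_mul]

@[simp] lemma aPerm_mul_pairPerm' (u v : Equiv.Perm (List Bool)) (x : Equiv.Perm (List Bool)) :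
    aPerm * (pairPerm u v * x) = pairPerm v u * (aPerm * x) := by
  rw [← mul_assoc, aPerm_mul_pairPerm, mul_assoc]

@[simp] lemma aPerm_inv : aPerm⁻¹ = aPerm := by
  apply inv_eq_of_mul_eq_one_right; exact aPerm_sq

@[simp] lemma Bp_inv : Bp⁻¹ = Bp := by
  apply inv_eq_of_mul_eq_one_right; exact Bp_sq

@[simp] lemma pairPerm_inv (u v : Equiv.Perm (List Bool)) :
    (pairPerm u v)⁻¹ = pairPerm u⁻¹ v⁻¹ := by
  apply inv_eq_of_mul_eq_one_right
  rw [pairPerm_mul]; simp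

/-- The key generators (up to relabelling): `Xp` has sections `(1, B)`, `Yp` has `(a, 1)`. -/
def Xp : Equiv.Perm (List Bool) := pairPerm 1 Bp
def Yp : Equiv.Perm (List Bool) := pairPerm aPerm 1

@[simp] lemma Xp_sq : Xp * Xp = 1 := by
  simp [Xp, pairPerm_mul]

@[simp] lemma Yp_sq : Yp * Yp = 1 := by
  simp [Yp, pairPerm_mul]

@[simp] lemma Xp_inv : Xp⁻¹ = Xp := by apply inv_eq_of_mul_eq_one_right; exact Xp_sq
@[simp] lemma Yp_inv : Yp⁻¹ = Yp := by apply inv_eq_of_mul_eq_one_right; exact Yp_sq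

end Grig
namespace Grig

/-! ### Identification of the generators when `σω` is constant -/

section Ident

variable {ω : Seq}

lemma genMap_eq_b (k : Fin 3) :
    ∀ (w : List Bool) (η : Seq), (∀ i, η i = ω 1) → k ≠ ω 1 → genMap k η w = bMapF w := by
  intro w
  induction w with
  | nil => intro η _ _; rfl
  | cons x w ih =>
      intro η hη hk
      cases x with
      | false =>
          have h0 : η 0 = ω 1 := hη 0
          have : ¬ (η 0 = k) := by rw [h0]; exact fun h => hk h.symm
          simp [genMap, this, bMapF]
      | true =>
          have : ∀ i, shift η i = ω 1 := fun i => hη (i + 1)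
          simp [genMap, bMapF, ih (shift η) this hk]

lemma genMap_eq_id (k : Fin 3) :
    ∀ (w : List Bool) (η : Seq), (∀ i, η i = ω 1) → k = ω 1 → genMap k η w = w := by
  intro w
  induction w with
  | nil => intro η _ _; rfl
  | cons x w ih =>
      intro η hη hk
      cases x with
      | false =>
          have h0 : η 0 = k := by rw [hη 0, hk]
          simp [genMap, h0]
      | true =>
          have : ∀ i, shift η i = ω 1 := fun i => hη (i + 1)
          simp [genMap, ih (shift η) this hk]

variable (hconst : ∀ i, ω (i + 1) = ω 1) (hne : ω 0 ≠ ω 1)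

include hconst in
lemma genPerm_eq_X (k : Fin 3) (hk : k = ω 0) (hk1 : k ≠ ω 1) : genPerm k ω = Xp := by
  apply Equiv.ext; intro w
  cases w with
  | nil => rfl
  | cons x w =>
      cases x with
      | false =>
          have : ω 0 = k := hk.symm
          simp [genPerm, genMap, this, Xp]
      | true =>
          have hsh : ∀ i, shift ω i = ω 1 := fun i => hconst i
          simp [genPerm, genMap, Xp, genMap_eq_b k w (shift ω) hsh hk1, Bp]

include hconst hne in
lemma genPerm_eq_Y (k : Fin 3) (hk : k = ω 1) : genPerm k ω = Yp := by
  apply Equiv.ext; intro w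
  cases w with
  | nil => rfl
  | cons x w =>
      cases x with
      | false =>
          have : ¬ (ω 0 = k) := by rw [hk]; exact hne
          simp [genPerm, genMap, this, Yp, aPerm, aMap]
      | true =>
          have hsh : ∀ i, shift ω i = ω 1 := fun i => hconst i
          simp [genPerm, genMap, Yp, genMap_eq_id k w (shift ω) hsh hk]

include hconst in
lemma genPerm_eq_Z (k : Fin 3) (hk0 : k ≠ ω 0) (hk1 : k ≠ ω 1) : genPerm k ω = Yp * Xp := by
  apply Equiv.ext; intro w
  cases w with
  | nil => rfl
  | cons x w =>
      cases x with
      | false =>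
          have : ¬ (ω 0 = k) := fun h => hk0 h.symm
          simp [genPerm, genMap, this, Yp, Xp, Equiv.Perm.mul_apply, aPerm, aMap]
      | true =>
          have hsh : ∀ i, shift ω i = ω 1 := fun i => hconst i
          simp [genPerm, genMap, Yp, Xp, Equiv.Perm.mul_apply,
            genMap_eq_b k w (shift ω) hsh hk1, Bp]

lemma genPerm_mem (k : Fin 3) : genPerm k ω ∈ G ω := by
  fin_cases k
  · exact d_mem ω
  · exact c_mem ω
  · exact b_mem ω

include hconst hne in
lemma Xp_mem : Xp ∈ G ω := by
  have h := genPerm_eq_X hconst (ω 0) rfl hne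
  rw [← h]; exact genPerm_mem _

include hconst hne in
lemma Yp_mem : Yp ∈ G ω := by
  have h := genPerm_eq_Y hconst hne (ω 1) rfl
  rw [← h]; exact genPerm_mem _

include hconst hne in
/-- Every generator of `G ω` is a word in `aPerm, Xp, Yp`. -/
lemma genPerm_cases (k : Fin 3) :
    genPerm k ω = Xp ∨ genPerm k ω = Yp ∨ genPerm k ω = Yp * Xp := by
  by_cases h0 : k = ω 0
  · exact Or.inl (genPerm_eq_X hconst k h0 (h0 ▸ hne))
  · by_cases h1 : k = ω 1
    · exact Or.inr (Or.inl (genPerm_eq_Y hconst hne k h1))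
    · exact Or.inr (Or.inr (genPerm_eq_Z hconst k h0 h1))

end Ident

end Grig
namespace Grig

/-! ### Length- and prefix-preserving permutations -/

lemma prefix_eq_of_length {u v w : List Bool} (hu : u <+: w) (hv : v <+: w)
    (h : u.length = v.length) : u = v := by
  rw [List.prefix_iff_eq_take] at hu hv
  rw [hu, hv, h]

def prefPres : Subgroup (Equiv.Perm (List Bool)) where
  carrier := {f | (∀ w, (f w).length = w.length) ∧ ∀ u v : List Bool, u <+: v → f u <+: f v}
  one_mem' := ⟨fun _ => rfl, fun _ _ h => h⟩
  mul_mem' := by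
    rintro f g ⟨hflen, hfpre⟩ ⟨hglen, hgpre⟩
    refine ⟨fun w => ?_, fun u v h => ?_⟩
    · rw [Equiv.Perm.mul_apply, hflen, hglen]
    · rw [Equiv.Perm.mul_apply, Equiv.Perm.mul_apply]
      exact hfpre _ _ (hgpre _ _ h)
  inv_mem' := by
    rintro f ⟨hflen, hfpre⟩
    have hinvlen : ∀ w, (f⁻¹ w).length = w.length := by
      intro w
      conv_rhs => rw [← (show f (f⁻¹ w) = w from f.apply_symm_apply w)]
      rw [hflen]
    refine ⟨hinvlen, fun u v h => ?_⟩
    have htake : (f⁻¹ v).take (f⁻¹ u).length <+: f⁻¹ v := List.take_prefix _ _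
    have h2 : f ((f⁻¹ v).take (f⁻¹ u).length) <+: v := by
      have := hfpre _ _ htake
      rwa [(show f (f⁻¹ v) = v from f.apply_symm_apply v)] at this
    have hlen : (f ((f⁻¹ v).take (f⁻¹ u).length)).length = u.length := by
      rw [hflen, List.length_take, hinvlen, hinvlen]
      exact Nat.min_eq_left h.length_le
    have heq : f ((f⁻¹ v).take (f⁻¹ u).length) = u := prefix_eq_of_length h2 h hlen
    have : (f⁻¹ v).take (f⁻¹ u).length = f⁻¹ u := by
      conv_rhs => rw [← heq]
      rw [(show ∀ x, f⁻¹ (f x) = x from f.symm_apply_apply)]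
    rw [← this]
    exact htake

lemma aPerm_mem_prefPres : aPerm ∈ prefPres := by
  refine ⟨aMap_length, ?_⟩
  rintro u v ⟨t, rfl⟩
  cases u with
  | nil => exact List.nil_prefix
  | cons x w => exact ⟨t, rfl⟩

lemma genPerm_mem_prefPres (k : Fin 3) (ω : Seq) : genPerm k ω ∈ prefPres := by
  refine ⟨fun w => genMap_length k w ω, ?_⟩
  rintro u v ⟨t, rfl⟩
  suffices h : ∀ (u t : List Bool) (η : Seq), genMap k η u <+: genMap k η (u ++ t) from
    h u t ω
  intro u
  induction u with
  | nil => intro t η; exact List.nil_prefix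
  | cons x w ih =>
      intro t η
      cases x with
      | false =>
          by_cases h : η 0 = k
          · simp only [genMap, List.cons_append, h, if_pos]
            exact ⟨t, rfl⟩
          · simp only [genMap, List.cons_append, h, if_neg, not_false_iff,
              List.cons_prefix_cons, true_and]
            cases w with
            | nil => exact List.nil_prefix
            | cons y w' => exact ⟨t, by simp [aMap]⟩
      | true =>
          simp only [genMap, List.cons_append, List.cons_prefix_cons, true_and]
          exact ih t (shift η)

lemma G_le_prefPres (ω : Seq) : G ω ≤ prefPres := by
  rw [G]
  refine (Subgroup.closure_le _).2 ?_
  intro x hx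
  simp only [Set.mem_insert_iff, Set.mem_singleton_iff] at hx
  rcases hx with rfl | rfl | rfl | rfl
  · exact aPerm_mem_prefPres
  · exact genPerm_mem_prefPres 2 ω
  · exact genPerm_mem_prefPres 1 ω
  · exact genPerm_mem_prefPres 0 ω

/-- If a prefix-preserving permutation fixes all words of length `n`, it fixes all
words of length `m ≤ n`. -/
lemma fix_low {f : Equiv.Perm (List Bool)} (hf : f ∈ prefPres) {n m : ℕ} (hmn : m ≤ n)
    (hfix : ∀ w : List Bool, w.length = n → f w = w) :
    ∀ w : List Bool, w.length = m → f w = w := by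
  intro w hw
  set W := w ++ List.replicate (n - m) false with hW
  have hWlen : W.length = n := by simp [hW, hw]; omega
  have h1 : f w <+: f W := hf.2 _ _ ⟨List.replicate (n - m) false, rfl⟩
  rw [hfix W hWlen] at h1
  have h2 : w <+: W := ⟨List.replicate (n - m) false, rfl⟩
  exact prefix_eq_of_length h1 h2 (by rw [hf.1 w])

end Grig
namespace Grig

/-! ### Counting fixed words of a given length -/

def allWords : ℕ → Finset (List Bool)
  | 0 => {[]}
  | m + 1 => (allWords m).image (List.cons false) ∪ (allWords m).image (List.cons true)

lemma mem_allWords : ∀ (m : ℕ) (w : List Bool), w ∈ allWords m ↔ w.length = m := by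
  intro m
  induction m with
  | zero =>
      intro w
      simp [allWords, List.length_eq_zero_iff]
  | succ m ih =>
      intro w
      cases w with
      | nil => simp [allWords]
      | cons x w =>
          cases x <;> simp [allWords, ih]

def Fixcnt (m : ℕ) (f : Equiv.Perm (List Bool)) : ℕ :=
  ((allWords m).filter (fun w => f w = w)).card

lemma Fixcnt_mul_right {m : ℕ} (f g : Equiv.Perm (List Bool))
    (hg : ∀ w : List Bool, w.length = m → g w = w) : Fixcnt m (f * g) = Fixcnt m f := by
  unfold Fixcnt
  congr 1
  apply Finset.filter_congr
  intro w hw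
  rw [mem_allWords] at hw
  simp [Equiv.Perm.mul_apply, hg w hw]

lemma Fixcnt_conj {m : ℕ} (f q : Equiv.Perm (List Bool))
    (hq : ∀ w : List Bool, (q w).length = w.length) :
    Fixcnt m (q⁻¹ * f * q) = Fixcnt m f := by
  unfold Fixcnt
  apply Finset.card_bij' (fun w _ => q w) (fun w _ => q⁻¹ w)
  · intro w hw
    simp only [Finset.mem_filter, mem_allWords] at hw ⊢
    constructor
    · rw [hq, hw.1]
    · have := hw.2
      simp only [Equiv.Perm.mul_apply] at this
      have h2 := congrArg q this
      rwa [(show ∀ x, q (q⁻¹ x) = x from q.apply_symm_apply)] at h2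
  · intro w hw
    simp only [Finset.mem_filter, mem_allWords] at hw ⊢
    constructor
    · have : (q (q⁻¹ w)).length = (q⁻¹ w).length := hq _
      rw [(show ∀ x, q (q⁻¹ x) = x from q.apply_symm_apply)] at this
      rw [← this, hw.1]
    · simp only [Equiv.Perm.mul_apply, (show ∀ x, q (q⁻¹ x) = x from q.apply_symm_apply), hw.2]
  · intro w _; exact q.symm_apply_apply w
  · intro w _; exact q.apply_symm_apply w

/-- The conjugacy-invariant vector of fixed-point counts used to separate the two systems. -/
def VecT (f : Equiv.Perm (List Bool)) : List ℕ :=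
  [Fixcnt 1 (f ^ 1), Fixcnt 2 (f ^ 1), Fixcnt 3 (f ^ 1), Fixcnt 4 (f ^ 1),
   Fixcnt 2 (f ^ 2), Fixcnt 3 (f ^ 2), Fixcnt 4 (f ^ 2), Fixcnt 4 (f ^ 4)]

end Grig
namespace Grig

/-! ### The master comparison lemma -/

lemma fixcnt_zpow_reduce (F : Equiv.Perm (List Bool)) (hF : F ∈ prefPres)
    (o : ℕ) (ho : 0 < o) (h4 : ∀ w : List Bool, w.length = 4 → (F ^ o) w = w)
    (m : ℕ) (hm : m ≤ 4) (c : ℕ) (k : ℤ) :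
    Fixcnt m ((F ^ k) ^ c) = Fixcnt m ((F ^ (k % (o : ℤ)).toNat) ^ c) := by
  have hr : ((k % (o : ℤ)).toNat : ℤ) = k % (o : ℤ) :=
    Int.toNat_of_nonneg (Int.emod_nonneg k (by exact_mod_cast ho.ne'))
  have hFo : F ^ o ∈ prefPres ⊓ levelStab 4 :=
    ⟨pow_mem hF o, fun w hw => h4 w hw⟩
  have key : (F ^ k) ^ c = (F ^ (k % (o : ℤ)).toNat) ^ c * (F ^ o) ^ ((k / o) * c) := by
    have e1 : (F ^ k) ^ c = F ^ (k * c) := by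
      rw [← zpow_natCast (F ^ k) c, ← zpow_mul]
    have e2 : (F ^ (k % (o : ℤ)).toNat) ^ c = F ^ ((k % (o : ℤ)) * c) := by
      rw [← pow_mul, ← zpow_natCast F ((k % (o : ℤ)).toNat * c)]
      congr 1
      push_cast [hr]
      ring
    have e3 : (F ^ o) ^ ((k / o) * c) = F ^ ((o : ℤ) * ((k / o) * c)) := by
      rw [← zpow_natCast F o, ← zpow_mul]
    rw [e1, e2, e3, ← zpow_add]
    congr 1
    have h := Int.emod_add_mul_ediv k (o : ℤ)
    nlinarith [h]
  rw [key]
  apply Fixcnt_mul_right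
  have hmem : (F ^ o) ^ ((k / o) * c) ∈ prefPres ⊓ levelStab 4 := zpow_mem hFo _
  intro w hw
  exact fix_low hmem.1 hm (fun w' hw' => hmem.2 w' hw') w hw

section Master

variable {ω : Seq} {n : ℕ}

lemma stab_fix_low (hn : 4 ≤ n) {u : ↥(G ω)} (hu : u ∈ stab ω n) {m : ℕ} (hm : m ≤ 4) :
    ∀ w : List Bool, w.length = m → (u : Equiv.Perm (List Bool)) w = w := by
  have hu' : (u : Equiv.Perm (List Bool)) ∈ levelStab n := Subgroup.mem_subgroupOf.mp hu
  exact fix_low (G_le_prefPres ω u.2) (le_trans hm hn) (fun w hw => hu' w hw)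

lemma master (hn : 4 ≤ n) (t s q p : ↥(G ω)) (ot os : ℕ) (hot : 0 < ot) (hos : 0 < os)
    (h4t : ∀ w : List Bool, w.length = 4 → ((t : Equiv.Perm (List Bool)) ^ ot) w = w)
    (h4s : ∀ w : List Bool, w.length = 4 → ((s : Equiv.Perm (List Bool)) ^ os) w = w)
    (k l : ℤ)
    (hmk : (QuotientGroup.mk (q⁻¹ * t ^ k * q) : ↥(G ω) ⧸ stab ω n)
         = QuotientGroup.mk (p⁻¹ * s ^ l * p)) :
    VecT ((t : Equiv.Perm (List Bool)) ^ (k % (ot : ℤ)).toNat)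
      = VecT ((s : Equiv.Perm (List Bool)) ^ (l % (os : ℤ)).toNat) := by
  have comp : ∀ m c : ℕ, m ≤ 4 →
      Fixcnt m (((t : Equiv.Perm (List Bool)) ^ (k % (ot : ℤ)).toNat) ^ c)
        = Fixcnt m (((s : Equiv.Perm (List Bool)) ^ (l % (os : ℤ)).toNat) ^ c) := by
    intro m c hm
    rw [← fixcnt_zpow_reduce _ (G_le_prefPres ω t.2) ot hot h4t m hm c k,
        ← fixcnt_zpow_reduce _ (G_le_prefPres ω s.2) os hos h4s m hm c l]
    -- pass to the quotient relation
    have hc : (QuotientGroup.mk ((q⁻¹ * t ^ k * q) ^ c) : ↥(G ω) ⧸ stab ω n)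
        = QuotientGroup.mk ((p⁻¹ * s ^ l * p) ^ c) := by
      have h1 := congrArg (fun z => z ^ c) hmk
      simpa using h1
    have hu : ((q⁻¹ * t ^ k * q) ^ c)⁻¹ * (p⁻¹ * s ^ l * p) ^ c ∈ stab ω n :=
      QuotientGroup.eq.mp hc
    set u : ↥(G ω) := ((q⁻¹ * t ^ k * q) ^ c)⁻¹ * (p⁻¹ * s ^ l * p) ^ c with hudef
    have hrel : (p⁻¹ * s ^ l * p) ^ c = (q⁻¹ * t ^ k * q) ^ c * u := by
      rw [hudef, mul_inv_cancel_left]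
    have hconjq : (q⁻¹ * t ^ k * q) ^ c = q⁻¹ * (t ^ k) ^ c * q := by
      have := conj_pow (a := q⁻¹) (b := t ^ k) (i := c)
      simpa using this
    have hconjp : (p⁻¹ * s ^ l * p) ^ c = p⁻¹ * (s ^ l) ^ c * p := by
      have := conj_pow (a := p⁻¹) (b := s ^ l) (i := c)
      simpa using this
    have hq : Fixcnt m (((t : Equiv.Perm (List Bool)) ^ k) ^ c)
        = Fixcnt m (((q⁻¹ * t ^ k * q) ^ c : ↥(G ω)) : Equiv.Perm (List Bool)) := by
      rw [hconjq]
      simp only [Subgroup.coe_mul, InvMemClass.coe_inv, SubmonoidClass.coe_pow,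
        SubgroupClass.coe_zpow]
      rw [Fixcnt_conj _ _ (G_le_lenPres ω q.2)]
    have hp : Fixcnt m (((s : Equiv.Perm (List Bool)) ^ l) ^ c)
        = Fixcnt m (((p⁻¹ * s ^ l * p) ^ c : ↥(G ω)) : Equiv.Perm (List Bool)) := by
      rw [hconjp]
      simp only [Subgroup.coe_mul, InvMemClass.coe_inv, SubmonoidClass.coe_pow,
        SubgroupClass.coe_zpow]
      rw [Fixcnt_conj _ _ (G_le_lenPres ω p.2)]
    rw [hq, hp, hrel]
    simp only [Subgroup.coe_mul]
    rw [Fixcnt_mul_right _ _ (fun w hw => stab_fix_low hn hu hm w hw)]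
  unfold VecT
  have h11 := comp 1 1 (by norm_num)
  have h21 := comp 2 1 (by norm_num)
  have h31 := comp 3 1 (by norm_num)
  have h41 := comp 4 1 (by norm_num)
  have h22 := comp 2 2 (by norm_num)
  have h32 := comp 3 2 (by norm_num)
  have h42 := comp 4 2 (by norm_num)
  have h44 := comp 4 4 (by norm_num)
  rw [h11, h21, h31, h41, h22, h32, h42, h44]

end Master

end Grig
set_option maxRecDepth 40000

namespace Grig

/-! ### The concrete entries of the two spherical systems -/

def F1 : Equiv.Perm (List Bool) := aPerm
def F2 : Equiv.Perm (List Bool) := aPerm * Xp * Yp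
def F3 : Equiv.Perm (List Bool) := Xp * aPerm * Xp * Yp * aPerm
def F4 : Equiv.Perm (List Bool) := (F1 * F2 * F3)⁻¹
def H1 : Equiv.Perm (List Bool) := Xp
def H2 : Equiv.Perm (List Bool) := Yp
def H3 : Equiv.Perm (List Bool) := aPerm * Xp
def H4 : Equiv.Perm (List Bool) := (H1 * H2 * H3)⁻¹

/-- The separating list of invariant vectors for the second system. -/
def S2L : List (List ℕ) :=
  [[0,0,0,0,0,0,0,16],[0,0,0,0,4,4,4,16],[2,0,0,0,4,8,16,16],
   [2,2,4,8,4,8,16,16],[2,4,4,4,4,8,16,16],[2,4,6,10,4,8,16,16]]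

-- exact order identities for the second system
lemma H1_ord : H1 ^ 2 = 1 := by rw [pow_two]; exact Xp_sq
lemma H2_ord : H2 ^ 2 = 1 := by rw [pow_two]; exact Yp_sq
lemma H3_ord : H3 ^ 4 = 1 := by
  have : H3 * H3 * H3 * H3 = 1 := by
    simp [H3, Xp, mul_assoc, pairPerm_mul, aPerm_mul_pairPerm]
  calc H3 ^ 4 = H3 * H3 * H3 * H3 := by
        rw [pow_succ, pow_succ, pow_succ, pow_one]
  _ = 1 := this
lemma H4_ord : H4 ^ 4 = 1 := by
  have : (H1 * H2 * H3) * (H1 * H2 * H3) * (H1 * H2 * H3) * (H1 * H2 * H3) = 1 := by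
    simp [H1, H2, H3, Xp, Yp, mul_assoc, pairPerm_mul, aPerm_mul_pairPerm]
  have h4 : (H1 * H2 * H3) ^ 4 = 1 := by
    calc (H1 * H2 * H3) ^ 4 = (H1 * H2 * H3) * (H1 * H2 * H3) * (H1 * H2 * H3) * (H1 * H2 * H3) := by
          rw [pow_succ, pow_succ, pow_succ, pow_one]
    _ = 1 := this
  rw [H4, inv_pow, h4, inv_one]

-- generation identities
lemma gen_X : F3 * F2 * F1 = Xp := by
  simp [F1, F2, F3, Xp, Yp, mul_assoc, pairPerm_mul, aPerm_mul_pairPerm]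
lemma gen_Y : F2 * F1 * F4 = Yp := by
  simp [F1, F2, F3, F4, Xp, Yp, mul_assoc, mul_inv_rev, pairPerm_mul, aPerm_mul_pairPerm]
lemma gen_A : H3 * H1 = aPerm := by
  simp [H1, H3, Xp, mul_assoc, pairPerm_mul, aPerm_mul_pairPerm]

-- decidable facts: the moduli
lemma F1_mod : ∀ w ∈ allWords 4, (F1 ^ 2) w = w := by decide
lemma F2_mod : ∀ w ∈ allWords 4, (F2 ^ 16) w = w := by decide
lemma F3_mod : ∀ w ∈ allWords 4, (F3 ^ 8) w = w := by decide
lemma F4_mod : ∀ w ∈ allWords 4, (F4 ^ 8) w = w := by decide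

-- decidable facts: vector separation
lemma F1_vec : ∀ r < 2, VecT (F1 ^ r) ∉ S2L := by decide
lemma F2_vec : ∀ r < 16, VecT (F2 ^ r) ∉ S2L := by decide
lemma F3_vec : ∀ r < 8, VecT (F3 ^ r) ∉ S2L := by decide
lemma F4_vec : ∀ r < 8, VecT (F4 ^ r) ∉ S2L := by decide
lemma H1_vec : ∀ r < 2, r ≠ 0 → VecT (H1 ^ r) ∈ S2L := by decide
lemma H2_vec : ∀ r < 2, r ≠ 0 → VecT (H2 ^ r) ∈ S2L := by decide
lemma H3_vec : ∀ r < 4, r ≠ 0 → VecT (H3 ^ r) ∈ S2L := by decide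
lemma H4_vec : ∀ r < 4, r ≠ 0 → VecT (H4 ^ r) ∈ S2L := by decide

-- decidable facts: nontriviality at level 4
lemma F1_nt : ¬ ∀ w ∈ allWords 4, F1 w = w := by decide
lemma F2_nt : ¬ ∀ w ∈ allWords 4, F2 w = w := by decide
lemma F3_nt : ¬ ∀ w ∈ allWords 4, F3 w = w := by decide
lemma F4_nt : ¬ ∀ w ∈ allWords 4, F4 w = w := by decide
lemma H1_nt : ¬ ∀ w ∈ allWords 4, H1 w = w := by decide
lemma H2_nt : ¬ ∀ w ∈ allWords 4, H2 w = w := by decide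
lemma H3_nt : ¬ ∀ w ∈ allWords 4, H3 w = w := by decide
lemma H4_nt : ¬ ∀ w ∈ allWords 4, H4 w = w := by decide

section SigmaCase

variable {ω : Seq} {n : ℕ}

/-- The key case analysis for the disjointness of the two Σ-sets. -/
lemma sigma_case (hn : 4 ≤ n) (t s : ↥(G ω)) (ot os : ℕ) (hot : 0 < ot) (hos : 0 < os)
    (h4t : ∀ w ∈ allWords 4, ((t : Equiv.Perm (List Bool)) ^ ot) w = w)
    (hsex : s ^ os = 1)
    (hnotin : ∀ r < ot, VecT ((t : Equiv.Perm (List Bool)) ^ r) ∉ S2L)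
    (hin : ∀ r < os, r ≠ 0 → VecT ((s : Equiv.Perm (List Bool)) ^ r) ∈ S2L)
    (q p : ↥(G ω)) (k l : ℤ)
    (hmk : (QuotientGroup.mk (q⁻¹ * t ^ k * q) : ↥(G ω) ⧸ stab ω n)
         = QuotientGroup.mk (p⁻¹ * s ^ l * p)) :
    (QuotientGroup.mk (q⁻¹ * t ^ k * q) : ↥(G ω) ⧸ stab ω n) = 1 := by
  have h4t' : ∀ w : List Bool, w.length = 4 → ((t : Equiv.Perm (List Bool)) ^ ot) w = w :=
    fun w hw => h4t w ((mem_allWords 4 w).mpr hw)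
  have h4s' : ∀ w : List Bool, w.length = 4 → ((s : Equiv.Perm (List Bool)) ^ os) w = w := by
    intro w _
    have : ((s : Equiv.Perm (List Bool)) ^ os) = ((s ^ os : ↥(G ω)) : Equiv.Perm (List Bool)) := by
      simp [SubmonoidClass.coe_pow]
    rw [this, hsex]
    rfl
  by_cases hr0 : (l % (os : ℤ)).toNat = 0
  · -- the `s`-power is trivial
    have hlnn : 0 ≤ l % (os : ℤ) := Int.emod_nonneg l (by exact_mod_cast hos.ne')
    have hl0 : l % (os : ℤ) = 0 := by omega
    have hdvd : (os : ℤ) ∣ l := Int.dvd_of_emod_eq_zero hl0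
    obtain ⟨d, rfl⟩ := hdvd
    have hs1 : s ^ ((os : ℤ) * d) = 1 := by
      rw [zpow_mul, zpow_natCast, hsex, one_zpow]
    rw [hmk, hs1]
    simp
  · exfalso
    have hvt := master hn t s q p ot os hot hos h4t' h4s' k l hmk
    have hlt1 : (k % (ot : ℤ)).toNat < ot := by
      have h1 := Int.emod_nonneg k (show ((ot : ℤ)) ≠ 0 by exact_mod_cast hot.ne')
      have h2 := Int.emod_lt_of_pos k (show (0:ℤ) < (ot : ℤ) by exact_mod_cast hot)
      omega
    have hlt2 : (l % (os : ℤ)).toNat < os := by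
      have h1 := Int.emod_nonneg l (show ((os : ℤ)) ≠ 0 by exact_mod_cast hos.ne')
      have h2 := Int.emod_lt_of_pos l (show (0:ℤ) < (os : ℤ) by exact_mod_cast hos)
      omega
    exact hnotin _ hlt1 (hvt ▸ hin _ hlt2 hr0)

end SigmaCase

end Grig
namespace Grig

section Entries

variable {ω : Seq} (hconst : ∀ i, ω (i + 1) = ω 1) (hne : ω 0 ≠ ω 1)

def tE1 : ↥(G ω) := ⟨F1, aPerm_mem ω⟩
def tE2 : ↥(G ω) :=
  ⟨F2, mul_mem (mul_mem (aPerm_mem ω) (Xp_mem hconst hne)) (Yp_mem hconst hne)⟩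
def tE3 : ↥(G ω) :=
  ⟨F3, mul_mem (mul_mem (mul_mem (mul_mem (Xp_mem hconst hne) (aPerm_mem ω))
    (Xp_mem hconst hne)) (Yp_mem hconst hne)) (aPerm_mem ω)⟩
def tE4 : ↥(G ω) := (tE1 * tE2 hconst hne * tE3 hconst hne)⁻¹
def sE1 : ↥(G ω) := ⟨H1, Xp_mem hconst hne⟩
def sE2 : ↥(G ω) := ⟨H2, Yp_mem hconst hne⟩
def sE3 : ↥(G ω) := ⟨H3, mul_mem (aPerm_mem ω) (Xp_mem hconst hne)⟩
def sE4 : ↥(G ω) := (sE1 hconst hne * sE2 hconst hne * sE3 hconst hne)⁻¹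

lemma sE1_ord : sE1 hconst hne ^ 2 = 1 := by
  apply Subtype.ext
  rw [SubmonoidClass.coe_pow, OneMemClass.coe_one]
  exact H1_ord

lemma sE2_ord : sE2 hconst hne ^ 2 = 1 := by
  apply Subtype.ext
  rw [SubmonoidClass.coe_pow, OneMemClass.coe_one]
  exact H2_ord

lemma sE3_ord : sE3 hconst hne ^ 4 = 1 := by
  apply Subtype.ext
  rw [SubmonoidClass.coe_pow, OneMemClass.coe_one]
  exact H3_ord

lemma sE4_ord : sE4 hconst hne ^ 4 = 1 := by
  apply Subtype.ext
  rw [SubmonoidClass.coe_pow, OneMemClass.coe_one]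
  exact H4_ord

end Entries

section MainAux

variable {ω : Seq} {n : ℕ}

lemma mk_ne_one (hn : 4 ≤ n) (g : ↥(G ω))
    (hg : ¬ ∀ w ∈ allWords 4, (g : Equiv.Perm (List Bool)) w = w) :
    (QuotientGroup.mk' (stab ω n)) g ≠ 1 := by
  intro h
  rw [QuotientGroup.mk'_apply, QuotientGroup.eq_one_iff] at h
  exact hg (fun w hw => stab_fix_low hn h (le_refl 4) w ((mem_allWords 4 w).mp hw))

lemma one_mem_sigma {Q : Type*} [Group Q] (T : Fin 4 → Q) : 1 ∈ SigmaSet T := by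
  refine Set.mem_iUnion.mpr ⟨1, Set.mem_iUnion.mpr ⟨0, ⟨1, ?_, by simp⟩⟩⟩
  exact Subgroup.one_mem _

end MainAux

end Grig

namespace Grig

/-- If `σω` is a constant sequence but `ω` is not constant
(i.e. `ω_i = ω_2` for all `i ≥ 2` while `ω_1 ≠ ω_2`), then for every `n ≥ 4` the
quotient `G_ω / St_{G_ω}(n)` admits an unmixed ramification structure of size (4,4). -/
theorem quotient_hasRamificationStructure_of_shift_constant (ω : Seq)
    (hconst : ∀ i, ω (i + 1) = ω 1) (hne : ω 0 ≠ ω 1) (n : ℕ) (hn : 4 ≤ n) :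
    HasRamificationStructure (↥(G ω) ⧸ stab ω n) 4 4 := by
  have hXm : Xp ∈ G ω := Xp_mem hconst hne
  have hYm : Yp ∈ G ω := Yp_mem hconst hne
  set π := QuotientGroup.mk' (stab ω n) with hπ
  set t1 : ↥(G ω) := tE1 with ht1
  set t2 : ↥(G ω) := tE2 hconst hne with ht2
  set t3 : ↥(G ω) := tE3 hconst hne with ht3
  set t4 : ↥(G ω) := tE4 hconst hne with ht4
  set s1 : ↥(G ω) := sE1 hconst hne with hs1
  set s2 : ↥(G ω) := sE2 hconst hne with hs2
  set s3 : ↥(G ω) := sE3 hconst hne with hs3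
  set s4 : ↥(G ω) := sE4 hconst hne with hs4
  refine ⟨![π t1, π t2, π t3, π t4], ![π s1, π s2, π s3, π s4],
    ⟨by norm_num, ?_, ?_, ?_⟩, ⟨by norm_num, ?_, ?_, ?_⟩, ?_⟩
  · -- entries of T1 nontrivial
    intro i
    fin_cases i <;>
      simp only [Matrix.cons_val_zero, Matrix.cons_val_one, Matrix.head_cons,
        Matrix.cons_val_two, Matrix.tail_cons, Matrix.cons_val_three]
    · exact mk_ne_one hn t1 F1_nt
    · exact mk_ne_one hn t2 F2_nt
    · exact mk_ne_one hn t3 F3_nt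
    · exact mk_ne_one hn t4 F4_nt
  · -- T1 generates
    rw [Subgroup.eq_top_iff']
    intro x
    obtain ⟨g, rfl⟩ := QuotientGroup.mk'_surjective (stab ω n) x
    set S := Subgroup.closure (Set.range ![π t1, π t2, π t3, π t4]) with hS
    have hmem : ∀ i : Fin 4, (![π t1, π t2, π t3, π t4]) i ∈ S :=
      fun i => Subgroup.subset_closure ⟨i, rfl⟩
    have h1 : π t1 ∈ S := hmem 0
    have h2 : π t2 ∈ S := hmem 1
    have h3 : π t3 ∈ S := hmem 2
    have h4 : π t4 ∈ S := hmem 3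
    have hX : π ⟨Xp, hXm⟩ ∈ S := by
      have he : (⟨Xp, hXm⟩ : ↥(G ω)) = t3 * t2 * t1 := Subtype.ext gen_X.symm
      rw [he, map_mul, map_mul]
      exact mul_mem (mul_mem h3 h2) h1
    have hY : π ⟨Yp, hYm⟩ ∈ S := by
      have he : (⟨Yp, hYm⟩ : ↥(G ω)) = t2 * t1 * t4 := Subtype.ext gen_Y.symm
      rw [he, map_mul, map_mul]
      exact mul_mem (mul_mem h2 h1) h4
    have hA : π ⟨aPerm, aPerm_mem ω⟩ ∈ S := h1
    have hgen : ∀ (k : Fin 3) (pf : genPerm k ω ∈ G ω), π ⟨genPerm k ω, pf⟩ ∈ S := by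
      intro k pf
      rcases genPerm_cases hconst hne k with h | h | h
      · rw [show (⟨genPerm k ω, pf⟩ : ↥(G ω)) = ⟨Xp, hXm⟩ from Subtype.ext h]; exact hX
      · rw [show (⟨genPerm k ω, pf⟩ : ↥(G ω)) = ⟨Yp, hYm⟩ from Subtype.ext h]; exact hY
      · rw [show (⟨genPerm k ω, pf⟩ : ↥(G ω)) = (⟨Yp, hYm⟩ : ↥(G ω)) * ⟨Xp, hXm⟩ from
          Subtype.ext h, map_mul]
        exact mul_mem hY hX
    have key : ∀ (gp : Equiv.Perm (List Bool)) (hgp : gp ∈ G ω), π ⟨gp, hgp⟩ ∈ S := by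
      intro gp hgp
      refine Subgroup.closure_induction
        (k := {aPerm, b ω, c ω, d ω}) (p := fun x hx => π ⟨x, hx⟩ ∈ S) ?_ ?_ ?_ ?_ hgp
      · intro x hx
        rcases hx with rfl | rfl | rfl | rfl
        · exact hA
        · exact hgen 2 _
        · exact hgen 1 _
        · exact hgen 0 _
      · show π 1 ∈ S
        rw [map_one]; exact one_mem S
      · intro x y hx hy px py
        show π (⟨x, hx⟩ * ⟨y, hy⟩) ∈ S
        rw [map_mul]; exact mul_mem px py
      · intro x hx px
        show π (⟨x, hx⟩)⁻¹ ∈ S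
        rw [map_inv]; exact inv_mem px
    exact key g.1 g.2
  · -- T1 product
    have h4eq : t4 = (t1 * t2 * t3)⁻¹ := Subtype.ext rfl
    have hprod : t1 * (t2 * (t3 * (t4 * 1))) = 1 := by rw [h4eq, mul_one]; group
    calc (List.ofFn ![π t1, π t2, π t3, π t4]).prod
        = π (t1 * (t2 * (t3 * (t4 * 1)))) := by simp [List.ofFn_succ, map_mul]
      _ = 1 := by rw [hprod, map_one]
  · -- entries of T2 nontrivial
    intro i
    fin_cases i <;>
      simp only [Matrix.cons_val_zero, Matrix.cons_val_one, Matrix.head_cons,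
        Matrix.cons_val_two, Matrix.tail_cons, Matrix.cons_val_three]
    · exact mk_ne_one hn s1 H1_nt
    · exact mk_ne_one hn s2 H2_nt
    · exact mk_ne_one hn s3 H3_nt
    · exact mk_ne_one hn s4 H4_nt
  · -- T2 generates
    rw [Subgroup.eq_top_iff']
    intro x
    obtain ⟨g, rfl⟩ := QuotientGroup.mk'_surjective (stab ω n) x
    set S := Subgroup.closure (Set.range ![π s1, π s2, π s3, π s4]) with hS
    have hmem : ∀ i : Fin 4, (![π s1, π s2, π s3, π s4]) i ∈ S :=
      fun i => Subgroup.subset_closure ⟨i, rfl⟩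
    have h1 : π s1 ∈ S := hmem 0
    have h2 : π s2 ∈ S := hmem 1
    have h3 : π s3 ∈ S := hmem 2
    have hX : π ⟨Xp, hXm⟩ ∈ S := h1
    have hY : π ⟨Yp, hYm⟩ ∈ S := h2
    have hA : π ⟨aPerm, aPerm_mem ω⟩ ∈ S := by
      have he : (⟨aPerm, aPerm_mem ω⟩ : ↥(G ω)) = s3 * s1 := Subtype.ext gen_A.symm
      rw [he, map_mul]
      exact mul_mem h3 h1
    have hgen : ∀ (k : Fin 3) (pf : genPerm k ω ∈ G ω), π ⟨genPerm k ω, pf⟩ ∈ S := by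
      intro k pf
      rcases genPerm_cases hconst hne k with h | h | h
      · rw [show (⟨genPerm k ω, pf⟩ : ↥(G ω)) = ⟨Xp, hXm⟩ from Subtype.ext h]; exact hX
      · rw [show (⟨genPerm k ω, pf⟩ : ↥(G ω)) = ⟨Yp, hYm⟩ from Subtype.ext h]; exact hY
      · rw [show (⟨genPerm k ω, pf⟩ : ↥(G ω)) = (⟨Yp, hYm⟩ : ↥(G ω)) * ⟨Xp, hXm⟩ from
          Subtype.ext h, map_mul]
        exact mul_mem hY hX
    have key : ∀ (gp : Equiv.Perm (List Bool)) (hgp : gp ∈ G ω), π ⟨gp, hgp⟩ ∈ S := by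
      intro gp hgp
      refine Subgroup.closure_induction
        (k := {aPerm, b ω, c ω, d ω}) (p := fun x hx => π ⟨x, hx⟩ ∈ S) ?_ ?_ ?_ ?_ hgp
      · intro x hx
        rcases hx with rfl | rfl | rfl | rfl
        · exact hA
        · exact hgen 2 _
        · exact hgen 1 _
        · exact hgen 0 _
      · show π 1 ∈ S
        rw [map_one]; exact one_mem S
      · intro x y hx hy px py
        show π (⟨x, hx⟩ * ⟨y, hy⟩) ∈ S
        rw [map_mul]; exact mul_mem px py
      · intro x hx px
        show π (⟨x, hx⟩)⁻¹ ∈ S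
        rw [map_inv]; exact inv_mem px
    exact key g.1 g.2
  · -- T2 product
    have h4eq : s4 = (s1 * s2 * s3)⁻¹ := Subtype.ext rfl
    have hprod : s1 * (s2 * (s3 * (s4 * 1))) = 1 := by rw [h4eq, mul_one]; group
    calc (List.ofFn ![π s1, π s2, π s3, π s4]).prod
        = π (s1 * (s2 * (s3 * (s4 * 1)))) := by simp [List.ofFn_succ, map_mul]
      _ = 1 := by rw [hprod, map_one]
  · -- Σ-disjointness
    apply Set.eq_of_subset_of_subset
    · rintro x ⟨hx1, hx2⟩
      simp only [SigmaSet, Set.mem_iUnion, Set.mem_image, SetLike.mem_coe] at hx1 hx2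
      obtain ⟨qq, i, y, hy, hyx⟩ := hx1
      obtain ⟨pp, j, z, hz, hzx⟩ := hx2
      rw [Subgroup.mem_zpowers_iff] at hy hz
      obtain ⟨k, rfl⟩ := hy
      obtain ⟨l, rfl⟩ := hz
      obtain ⟨qt, rfl⟩ := QuotientGroup.mk'_surjective (stab ω n) qq
      obtain ⟨pt, rfl⟩ := QuotientGroup.mk'_surjective (stab ω n) pp
      subst hyx
      rw [Set.mem_singleton_iff]
      have tdata : ∀ i : Fin 4, ∃ (t : ↥(G ω)) (ot : ℕ),
          (![π t1, π t2, π t3, π t4]) i = π t ∧ 0 < ot ∧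
          (∀ w ∈ allWords 4, ((t : Equiv.Perm (List Bool)) ^ ot) w = w) ∧
          (∀ r < ot, VecT ((t : Equiv.Perm (List Bool)) ^ r) ∉ S2L) := by
        intro i
        fin_cases i
        · exact ⟨t1, 2, rfl, by norm_num, F1_mod, F1_vec⟩
        · exact ⟨t2, 16, rfl, by norm_num, F2_mod, F2_vec⟩
        · exact ⟨t3, 8, rfl, by norm_num, F3_mod, F3_vec⟩
        · exact ⟨t4, 8, rfl, by norm_num, F4_mod, F4_vec⟩
      have sdata : ∀ j : Fin 4, ∃ (s : ↥(G ω)) (os : ℕ),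
          (![π s1, π s2, π s3, π s4]) j = π s ∧ 0 < os ∧ s ^ os = 1 ∧
          (∀ r < os, r ≠ 0 → VecT ((s : Equiv.Perm (List Bool)) ^ r) ∈ S2L) := by
        intro j
        fin_cases j
        · exact ⟨s1, 2, rfl, by norm_num, sE1_ord hconst hne, H1_vec⟩
        · exact ⟨s2, 2, rfl, by norm_num, sE2_ord hconst hne, H2_vec⟩
        · exact ⟨s3, 4, rfl, by norm_num, sE3_ord hconst hne, H3_vec⟩
        · exact ⟨s4, 4, rfl, by norm_num, sE4_ord hconst hne, H4_vec⟩
      obtain ⟨t, ot, hTi, hot, h4t, hvec⟩ := tdata i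
      obtain ⟨s, os, hSj, hos, hsord, hsvec⟩ := sdata j
      rw [hTi] at hzx ⊢
      rw [hSj] at hzx
      simp only [← map_zpow, ← map_inv, ← map_mul] at hzx ⊢
      exact sigma_case hn t s ot os hot hos h4t hsord hvec hsvec qt pt k l hzx.symm
    · intro x hx
      rw [Set.mem_singleton_iff] at hx
      subst hx
      exact ⟨one_mem_sigma _, one_mem_sigma _⟩


end Grig
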